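/- arXiv:math/0410228 — 3 statements merged into one kernel-verified Lean document; each statement's English description precedes it below -/
import Mathlib

section
/- Let $\{a_j\}_{j=0}^\infty$ and $\{b_k\}_{k=0}^\infty$ be submultiplicative sequences of nonnegative real numbers with $a_0 = b_0 = 1$, and define $c_n = \sum_{j=0}^n \binom{n}{j} a_j b_{n-j}$ for each nonnegative integer $n$. Then $\{c_n\}_{n=0}^\infty$ is submultiplicative: for all nonnegative integers $m, n$, $c_{m+n} \le c_m \cdot c_n$. -/
/-!
Read `c n` as a sum over the subsets `S` of an `n`-element set, weighted by `a #S * b (n - #S)`.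
A subset of `α ⊕ β` is a pair of subsets of `α` and of `β`, whose sizes add up, so submultiplicativity
of `a` and `b` bounds each term of `c (m + n)` by the corresponding term of the product `c m * c n`.
-/

open Finset

section

variable {R : Type*} [CommSemiring R]

def binomialConvolution (a b : ℕ → R) (n : ℕ) : R :=
  ∑ j ∈ range (n + 1), (n.choose j : R) * a j * b (n - j)

theorem sum_finset_eq_binomialConvolution_card (a b : ℕ → R) (ι : Type*) [Fintype ι] :
    ∑ s : Finset ι, a #s * b (Fintype.card ι - #s) = binomialConvolution a b (Fintype.card ι) := by
  rw [← powerset_univ, sum_powerset_apply_card (fun k => a k * b (Fintype.card ι - k)), card_univ,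
    binomialConvolution]
  simp only [nsmul_eq_mul, mul_assoc]

variable [PartialOrder R] [IsOrderedRing R] {a b : ℕ → R}

theorem sum_finset_sum_le_mul_sum_finset (ha : ∀ j, 0 ≤ a j) (hb : ∀ k, 0 ≤ b k)
    (hasub : ∀ j l, a (j + l) ≤ a j * a l) (hbsub : ∀ j l, b (j + l) ≤ b j * b l)
    (α β : Type*) [Fintype α] [Fintype β] :
    ∑ s : Finset (α ⊕ β), a #s * b (Fintype.card (α ⊕ β) - #s) ≤
      (∑ s : Finset α, a #s * b (Fintype.card α - #s)) *
        ∑ t : Finset β, a #t * b (Fintype.card β - #t) := by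
  rw [← sumEquiv.symm.toEquiv.sum_comp, sum_mul_sum, ← Fintype.sum_prod_type']
  refine sum_le_sum fun ⟨s, t⟩ _ => ?_
  have hcard : Fintype.card (α ⊕ β) - (#s + #t) =
      (Fintype.card α - #s) + (Fintype.card β - #t) := by
    have := card_le_univ s
    have := card_le_univ t
    rw [Fintype.card_sum]
    omega
  simp only [OrderIso.coe_toEquiv, sumEquiv_symm_apply, card_disjSum, hcard]
  calc a (#s + #t) * b ((Fintype.card α - #s) + (Fintype.card β - #t))
      ≤ (a #s * a #t) * (b (Fintype.card α - #s) * b (Fintype.card β - #t)) :=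
        mul_le_mul (hasub _ _) (hbsub _ _) (hb _) (mul_nonneg (ha _) (ha _))
    _ = a #s * b (Fintype.card α - #s) * (a #t * b (Fintype.card β - #t)) := by ring

theorem binomialConvolution_add_le (ha : ∀ j, 0 ≤ a j) (hb : ∀ k, 0 ≤ b k)
    (hasub : ∀ j l, a (j + l) ≤ a j * a l) (hbsub : ∀ j l, b (j + l) ≤ b j * b l) (m n : ℕ) :
    binomialConvolution a b (m + n) ≤ binomialConvolution a b m * binomialConvolution a b n := by
  have key := sum_finset_sum_le_mul_sum_finset ha hb hasub hbsub (Fin m) (Fin n)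
  rwa [sum_finset_eq_binomialConvolution_card, sum_finset_eq_binomialConvolution_card,
    sum_finset_eq_binomialConvolution_card, Fintype.card_sum, Fintype.card_fin,
    Fintype.card_fin] at key

end

theorem binomial_convolution_submultiplicative_general
    (a b : ℕ → ℝ) (hann : ∀ j, 0 ≤ a j) (hbnn : ∀ k, 0 ≤ b k)
    (hasub : ∀ j l : ℕ, a (j + l) ≤ a j * a l)
    (hbsub : ∀ j l : ℕ, b (j + l) ≤ b j * b l)
    (c : ℕ → ℝ)
    (hc : ∀ n : ℕ, c n = ∑ j ∈ Finset.range (n + 1), (n.choose j : ℝ) * a j * b (n - j)) :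
    ∀ m n : ℕ, c (m + n) ≤ c m * c n := by
  obtain rfl : c = binomialConvolution a b := funext hc
  exact binomialConvolution_add_le hann hbnn hasub hbsub

theorem binomial_convolution_submultiplicative
    (a b : ℕ → ℝ) (hann : ∀ j, 0 ≤ a j) (hbnn : ∀ k, 0 ≤ b k)
    (ha0 : a 0 = 1) (hb0 : b 0 = 1)
    (hasub : ∀ j l : ℕ, a (j + l) ≤ a j * a l)
    (hbsub : ∀ j l : ℕ, b (j + l) ≤ b j * b l)
    (c : ℕ → ℝ)
    (hc : ∀ n : ℕ, c n = ∑ j ∈ Finset.range (n + 1), (n.choose j : ℝ) * a j * b (n - j)) :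
    ∀ m n : ℕ, c (m + n) ≤ c m * c n :=
  binomial_convolution_submultiplicative_general a b hann hbnn hasub hbsub c hc
end

section
/- Let $\{a_j\}_{j=1}^\infty$ and $\{b_k\}_{k=1}^\infty$ be submultiplicative sequences of nonnegative real numbers, extended by $a_0 = b_0 = 1$, and define $c_n = \sum_{j=0}^n \binom{n}{j} a_j b_{n-j}$. Then $\lim_{n \to \infty} (c_n)^{1/n} \le \lim_{j \to \infty} (a_j)^{1/j} + \lim_{k \to \infty} (b_k)^{1/k}$ (all three limits exist since the corresponding sequences are submultiplicative). -/
/-!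
For a submultiplicative sequence with `a 0 = 1`, put `La = inf_{j ≥ 1} a j ^ (1 / j)`. Then
`La ^ j ≤ a j` for all `j`, and for every `u > La` some `a k ≤ u ^ k`, whence by
submultiplicativity `a j ≤ C * u ^ j` for all `j`. Both bounds survive binomial convolution:
`(La + Lb) ^ n ≤ c n ≤ Ca * Cb * (u + v) ^ n` for `u > La`, `v > Lb`. Taking `n`-th roots,
`c n ^ (1 / n) → La + Lb`.
-/

open Filter Finset Topology

def IsExpGrowthRate (a : ℕ → ℝ) (L : ℝ) : Prop :=
  0 ≤ L ∧ (∀ n, L ^ n ≤ a n) ∧ ∀ u, L < u → ∃ C, ∀ n, a n ≤ C * u ^ n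

lemma eventually_rpow_one_div_mul_lt {C m u : ℝ} (hC : 0 < C) (hmu : m < u) :
    ∀ᶠ n : ℕ in atTop, C ^ ((1 : ℝ) / n) * m < u := by
  have hroot : Tendsto (fun n : ℕ => C ^ ((1 : ℝ) / n)) atTop (𝓝 1) := by
    simpa using tendsto_const_nhds.rpow tendsto_one_div_atTop_nhds_zero_nat (Or.inl hC.ne')
  exact (by simpa using hroot.mul_const m : Tendsto _ _ (𝓝 m)).eventually_lt_const hmu

namespace IsExpGrowthRate

variable {a b : ℕ → ℝ} {L La Lb : ℝ}

lemma nonneg (h : IsExpGrowthRate a L) (n : ℕ) : 0 ≤ a n :=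
  (pow_nonneg h.1 n).trans (h.2.1 n)

theorem tendsto_rpow_one_div (h : IsExpGrowthRate a L) :
    Tendsto (fun n : ℕ => a n ^ ((1 : ℝ) / n)) atTop (𝓝 L) := by
  obtain ⟨hL, hlow, hup⟩ := h
  refine tendsto_order.2 ⟨fun l hl => ?_, fun u hu => ?_⟩
  · filter_upwards [eventually_ne_atTop 0] with n hn
    calc l < L := hl
      _ = (L ^ n) ^ ((1 : ℝ) / n) := by rw [one_div, Real.pow_rpow_inv_natCast hL hn]
      _ ≤ a n ^ ((1 : ℝ) / n) := by gcongr; exact hlow n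
  · obtain ⟨m, hLm, hmu⟩ := exists_between hu
    have hm : 0 < m := hL.trans_lt hLm
    obtain ⟨C, hC⟩ := hup m hLm
    filter_upwards [eventually_rpow_one_div_mul_lt (lt_max_of_lt_right one_pos) hmu,
      eventually_ne_atTop 0] with n hlt hn
    refine lt_of_le_of_lt ?_ hlt
    calc a n ^ ((1 : ℝ) / n) ≤ (max C 1 * m ^ n) ^ ((1 : ℝ) / n) := by
          gcongr
          · exact (pow_nonneg hL n).trans (hlow n)
          · exact (hC n).trans (by gcongr; exact le_max_left C 1)
      _ = max C 1 ^ ((1 : ℝ) / n) * m := by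
          rw [Real.mul_rpow (by positivity) (by positivity), one_div,
            Real.pow_rpow_inv_natCast hm.le hn]

theorem binomial_convolution (ha : IsExpGrowthRate a La) (hb : IsExpGrowthRate b Lb) :
    IsExpGrowthRate (fun n => ∑ j ∈ range (n + 1), (n.choose j : ℝ) * a j * b (n - j))
      (La + Lb) := by
  refine ⟨add_nonneg ha.1 hb.1, fun n => ?_, fun u hu => ?_⟩
  · calc (La + Lb) ^ n = ∑ j ∈ range (n + 1), (n.choose j : ℝ) * La ^ j * Lb ^ (n - j) := by
          rw [add_pow]
          exact sum_congr rfl fun j _ => by ring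
      _ ≤ ∑ j ∈ range (n + 1), (n.choose j : ℝ) * a j * b (n - j) := by
          gcongr with j
          exacts [pow_nonneg hb.1 _, mul_nonneg (Nat.cast_nonneg _) (ha.nonneg j), ha.2.1 j,
            hb.2.1 _]
  · obtain ⟨ε, hε, rfl⟩ : ∃ ε > 0, u = La + ε + (Lb + ε) :=
      ⟨(u - (La + Lb)) / 2, by linarith, by ring⟩
    obtain ⟨Ca, hCa⟩ := ha.2.2 (La + ε) (by linarith)
    obtain ⟨Cb, hCb⟩ := hb.2.2 (Lb + ε) (by linarith)
    refine ⟨Ca * Cb, fun n => ?_⟩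
    calc ∑ j ∈ range (n + 1), (n.choose j : ℝ) * a j * b (n - j)
        ≤ ∑ j ∈ range (n + 1),
            (n.choose j : ℝ) * (Ca * (La + ε) ^ j) * (Cb * (Lb + ε) ^ (n - j)) := by
          gcongr with j
          exacts [hb.nonneg _, mul_nonneg (Nat.cast_nonneg _) ((ha.nonneg j).trans (hCa j)),
            hCa j, hCb _]
      _ = Ca * Cb * (La + ε + (Lb + ε)) ^ n := by
          rw [add_pow, mul_sum]
          exact sum_congr rfl fun j _ => by ring

end IsExpGrowthRate

section Submultiplicative

variable {a : ℕ → ℝ}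

lemma nonneg_of_map_zero (h0 : a 0 = 1) (hnn : ∀ j, 1 ≤ j → 0 ≤ a j) (j : ℕ) : 0 ≤ a j := by
  rcases j.eq_zero_or_pos with rfl | hj
  · exact h0 ▸ zero_le_one
  · exact hnn j hj

lemma add_le_mul_of_map_zero (h0 : a 0 = 1) (hsub : ∀ j l, 1 ≤ j → 1 ≤ l → a (j + l) ≤ a j * a l)
    (j l : ℕ) : a (j + l) ≤ a j * a l := by
  rcases j.eq_zero_or_pos with rfl | hj
  · simp [h0]
  rcases l.eq_zero_or_pos with rfl | hl
  · simp [h0]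
  exact hsub j l hj hl

lemma exists_le_mul_pow_of_le_pow (hnn : ∀ j, 0 ≤ a j) (hsub : ∀ j l, a (j + l) ≤ a j * a l)
    {α : ℝ} (hα : 0 < α) {k : ℕ} (hk : k ≠ 0) (hak : a k ≤ α ^ k) :
    ∃ C, ∀ j, a j ≤ C * α ^ j := by
  have hterm : ∀ r ∈ range k, 0 ≤ a r / α ^ r := fun r _ => by have := hnn r; positivity
  refine ⟨∑ r ∈ range k, a r / α ^ r, fun j => ?_⟩
  induction j using Nat.strong_induction_on with
  | _ j ih =>
    by_cases hj : j < k
    · calc a j = a j / α ^ j * α ^ j := by field_simp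
        _ ≤ (∑ r ∈ range k, a r / α ^ r) * α ^ j := by
          gcongr
          exact single_le_sum hterm (mem_range.2 hj)
    · obtain ⟨i, rfl⟩ := Nat.exists_eq_add_of_le (not_lt.1 hj)
      calc a (k + i) ≤ a k * a i := hsub k i
        _ ≤ α ^ k * ((∑ r ∈ range k, a r / α ^ r) * α ^ i) := by
          gcongr
          exacts [hnn i, ih i (by omega)]
        _ = (∑ r ∈ range k, a r / α ^ r) * α ^ (k + i) := by ring

theorem isExpGrowthRate_iInf (h0 : 1 ≤ a 0) (hnn : ∀ j, 0 ≤ a j)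
    (hsub : ∀ j l, a (j + l) ≤ a j * a l) :
    IsExpGrowthRate a (⨅ m : ℕ, a (m + 1) ^ ((1 : ℝ) / ↑(m + 1))) := by
  set L := ⨅ m : ℕ, a (m + 1) ^ ((1 : ℝ) / ↑(m + 1))
  have hroot_pow : ∀ m : ℕ, (a (m + 1) ^ ((1 : ℝ) / ↑(m + 1))) ^ (m + 1) = a (m + 1) := fun m => by
    rw [one_div, Real.rpow_inv_natCast_pow (hnn _) m.succ_ne_zero]
  have hL0 : 0 ≤ L := le_ciInf fun m => Real.rpow_nonneg (hnn _) _
  have hLle : ∀ m, L ≤ a (m + 1) ^ ((1 : ℝ) / ↑(m + 1)) :=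
    ciInf_le ⟨0, by rintro _ ⟨m, rfl⟩; exact Real.rpow_nonneg (hnn _) _⟩
  refine ⟨hL0, fun n => ?_, fun u hu => ?_⟩
  · rcases n with _ | m
    · simpa using h0
    · calc L ^ (m + 1) ≤ (a (m + 1) ^ ((1 : ℝ) / ↑(m + 1))) ^ (m + 1) := by gcongr; exact hLle m
        _ = a (m + 1) := hroot_pow m
  · obtain ⟨m, hm⟩ := exists_lt_of_ciInf_lt hu
    refine exists_le_mul_pow_of_le_pow hnn hsub (hL0.trans_lt hu) m.succ_ne_zero ?_
    calc a (m + 1) = (a (m + 1) ^ ((1 : ℝ) / ↑(m + 1))) ^ (m + 1) := (hroot_pow m).symm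
      _ ≤ u ^ (m + 1) := by gcongr; exact Real.rpow_nonneg (hnn _) _

end Submultiplicative

theorem binomial_convolution_limit_bound
    (a b : ℕ → ℝ)
    (hann : ∀ j, 1 ≤ j → 0 ≤ a j) (hbnn : ∀ k, 1 ≤ k → 0 ≤ b k)
    (hasub : ∀ j l : ℕ, 1 ≤ j → 1 ≤ l → a (j + l) ≤ a j * a l)
    (hbsub : ∀ j l : ℕ, 1 ≤ j → 1 ≤ l → b (j + l) ≤ b j * b l)
    (ha0 : a 0 = 1) (hb0 : b 0 = 1)
    (c : ℕ → ℝ)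
    (hc : ∀ n : ℕ, c n = ∑ j ∈ Finset.range (n + 1), (n.choose j : ℝ) * a j * b (n - j)) :
    ∃ La Lb Lc : ℝ,
      Tendsto (fun j : ℕ => (a j) ^ ((1 : ℝ) / j)) atTop (nhds La) ∧
      Tendsto (fun k : ℕ => (b k) ^ ((1 : ℝ) / k)) atTop (nhds Lb) ∧
      Tendsto (fun n : ℕ => (c n) ^ ((1 : ℝ) / n)) atTop (nhds Lc) ∧
      Lc ≤ La + Lb := by
  have ha := isExpGrowthRate_iInf ha0.ge (nonneg_of_map_zero ha0 hann)
    (add_le_mul_of_map_zero ha0 hasub)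
  have hb := isExpGrowthRate_iInf hb0.ge (nonneg_of_map_zero hb0 hbnn)
    (add_le_mul_of_map_zero hb0 hbsub)
  have hc' : IsExpGrowthRate c _ := funext hc ▸ ha.binomial_convolution hb
  exact ⟨_, _, _, ha.tendsto_rpow_one_div, hb.tendsto_rpow_one_div, hc'.tendsto_rpow_one_div,
    le_rfl⟩
end

section
/- Let $\mathcal{A}$ be a commutative real or complex normed algebra with multiplicative identity $e$ of norm $1$, and for $x \in \mathcal{A}$ let $R(x) = \inf_{n \ge 1} \|x^n\|^{1/n} = \lim_{n \to \infty} \|x^n\|^{1/n}$. Then $R$ is a seminorm on $\mathcal{A}$: $R(\alpha x) = |\alpha| R(x)$ for all scalars $\alpha$ and $R(x + y) \le R(x) + R(y)$ for all $x, y \in \mathcal{A}$; moreover $R(e) = 1$ and $R(x y) \le R(x) R(y)$ for all $x, y \in \mathcal{A}$. -/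
/-!
`R` is Mathlib's `smoothingFun` of the norm, and `R x` is the limit of `‖x ^ n‖ ^ (1 / n)`
(Fekete's lemma). Homogeneity and `R 1 = 1` are read off the infimum, submultiplicativity passes
to the limit from `‖(x y) ^ n‖ ≤ ‖x ^ n‖ ‖y ^ n‖`. For subadditivity, `R x < r` gives
`‖x ^ n‖ ≤ C r ^ n` for all `n`, so the binomial theorem bounds `‖(x + y) ^ n‖` by
`C D (r + s) ^ n`, and `(C D) ^ (1 / n) → 1`.
-/

open Filter Finset

theorem map_nsmul_le {F α : Type*} [AddGroup α] [FunLike F α ℝ] [AddGroupSeminormClass F α ℝ]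
    (f : F) (n : ℕ) (a : α) : f (n • a) ≤ n * f a := by
  induction n with
  | zero => simp
  | succ n ih =>
    rw [succ_nsmul, Nat.cast_succ, add_one_mul]
    exact (map_add_le_add f _ _).trans (by gcongr)

namespace RingSeminorm

variable {R : Type*} [CommRing R] (μ : RingSeminorm R)

theorem map_add_pow_le (x y : R) (n : ℕ) :
    μ ((x + y) ^ n) ≤ ∑ m ∈ antidiagonal n, n.choose m.1 * (μ (x ^ m.1) * μ (y ^ m.2)) := by
  rw [(Commute.all x y).add_pow']
  refine (le_sum_of_subadditive μ (map_zero μ).le (map_add_le_add μ) _ _).trans ?_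
  gcongr with m
  exact (map_nsmul_le μ _ _).trans (by gcongr; exact map_mul_le_mul μ _ _)

end RingSeminorm

section smoothingFun

variable {R : Type*} [CommRing R] (μ : RingSeminorm R)

theorem smoothingFun_one (hμ1 : μ 1 = 1) : smoothingFun μ 1 = 1 :=
  (smoothingFun_of_powMul μ hμ1.le fun n _ => by rw [one_pow, hμ1, one_pow]).trans hμ1

theorem smoothingFun_mul_le (hμ1 : μ 1 ≤ 1) (x y : R) :
    smoothingFun μ (x * y) ≤ smoothingFun μ x * smoothingFun μ y := by
  refine le_of_tendsto_of_tendsto' (tendsto_smoothingFun_of_map_one_le_one μ hμ1 _)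
    ((tendsto_smoothingFun_of_map_one_le_one μ hμ1 x).mul
      (tendsto_smoothingFun_of_map_one_le_one μ hμ1 y)) fun n => ?_
  calc μ ((x * y) ^ n) ^ (1 / n : ℝ) ≤ (μ (x ^ n) * μ (y ^ n)) ^ (1 / n : ℝ) := by
        rw [mul_pow]
        gcongr
        exact map_mul_le_mul μ _ _
    _ = μ (x ^ n) ^ (1 / n : ℝ) * μ (y ^ n) ^ (1 / n : ℝ) :=
        Real.mul_rpow (apply_nonneg μ _) (apply_nonneg μ _)

theorem exists_map_pow_le_mul_pow_of_smoothingFun_lt (hμ1 : μ 1 ≤ 1) {x : R} {r : ℝ}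
    (hr : smoothingFun μ x < r) : ∃ C > 0, ∀ n : ℕ, μ (x ^ n) ≤ C * r ^ n := by
  have hr0 : 0 < r := (smoothingFun_nonneg μ hμ1 x).trans_lt hr
  have hev : ∀ᶠ n : ℕ in atTop, μ (x ^ n) / r ^ n ≤ 1 := by
    filter_upwards [(tendsto_smoothingFun_of_map_one_le_one μ hμ1 x).eventually
      (gt_mem_nhds hr), eventually_ne_atTop 0] with n hn hn0
    rw [smoothingSeminormSeq, one_div,
      Real.rpow_inv_lt_iff_of_pos (apply_nonneg μ _) hr0.le (by positivity)] at hn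
    rw [div_le_one (by positivity), ← Real.rpow_natCast]
    exact hn.le
  obtain ⟨C, hC⟩ := (isBoundedUnder_of_eventually_le hev).bddAbove_range
  refine ⟨max C 1, by positivity, fun n => ?_⟩
  rw [← div_le_iff₀ (by positivity)]
  exact (hC ⟨n, rfl⟩).trans (le_max_left _ _)

theorem smoothingFun_le_of_map_pow_le_mul_pow {x : R} {C r : ℝ} (hC : 0 < C) (hr : 0 ≤ r)
    (h : ∀ n : ℕ, μ (x ^ n) ≤ C * r ^ n) : smoothingFun μ x ≤ r := by
  have hlim : Tendsto (fun n : ℕ => C ^ (1 / n : ℝ) * r) atTop (nhds r) := by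
    simpa using ((Real.continuousAt_const_rpow hC.ne').tendsto.comp
      tendsto_one_div_atTop_nhds_zero_nat).mul_const r
  refine ge_of_tendsto hlim (eventually_atTop.2 ⟨1, fun n hn => ?_⟩)
  calc smoothingFun μ x ≤ μ (x ^ n) ^ (1 / n : ℝ) := smoothingFun_le μ x ⟨n, hn⟩
    _ ≤ (C * r ^ n) ^ (1 / n : ℝ) := by gcongr; exact h n
    _ = C ^ (1 / n : ℝ) * r := by
        rw [Real.mul_rpow hC.le (by positivity), one_div,
          Real.pow_rpow_inv_natCast hr (by omega)]

theorem smoothingFun_add_le_of_lt (hμ1 : μ 1 ≤ 1) {x y : R} {r s : ℝ}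
    (hr : smoothingFun μ x < r) (hs : smoothingFun μ y < s) : smoothingFun μ (x + y) ≤ r + s := by
  obtain ⟨C, hC, hx⟩ := exists_map_pow_le_mul_pow_of_smoothingFun_lt μ hμ1 hr
  obtain ⟨D, hD, hy⟩ := exists_map_pow_le_mul_pow_of_smoothingFun_lt μ hμ1 hs
  have hr0 : 0 ≤ r := (smoothingFun_nonneg μ hμ1 x).trans hr.le
  have hs0 : 0 ≤ s := (smoothingFun_nonneg μ hμ1 y).trans hs.le
  refine smoothingFun_le_of_map_pow_le_mul_pow μ (mul_pos hC hD) (by positivity) fun n => ?_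
  calc μ ((x + y) ^ n)
      ≤ ∑ m ∈ antidiagonal n, n.choose m.1 * (μ (x ^ m.1) * μ (y ^ m.2)) :=
        μ.map_add_pow_le x y n
    _ ≤ ∑ m ∈ antidiagonal n, n.choose m.1 * (C * r ^ m.1 * (D * s ^ m.2)) := by
        gcongr with m
        · exact hx _
        · exact hy _
    _ = C * D * (r + s) ^ n := by
        rw [(Commute.all r s).add_pow', mul_sum]
        refine sum_congr rfl fun m _ => ?_
        rw [nsmul_eq_mul]
        ring

theorem smoothingFun_add_le (hμ1 : μ 1 ≤ 1) (x y : R) :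
    smoothingFun μ (x + y) ≤ smoothingFun μ x + smoothingFun μ y := by
  refine le_of_forall_pos_le_add fun ε hε => ?_
  have := smoothingFun_add_le_of_lt μ hμ1 (lt_add_of_pos_right (smoothingFun μ x) (half_pos hε))
    (lt_add_of_pos_right (smoothingFun μ y) (half_pos hε))
  linarith

end smoothingFun

theorem smoothingFun_norm_smul {𝕜 A : Type*} [NormedField 𝕜] [SeminormedCommRing A]
    [NormedAlgebra 𝕜 A] (α : 𝕜) (x : A) :
    smoothingFun (normRingSeminorm A) (α • x) = ‖α‖ * smoothingFun (normRingSeminorm A) x := by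
  rw [smoothingFun, smoothingFun, Real.mul_iInf_of_nonneg (norm_nonneg α)]
  refine iInf_congr fun n => ?_
  change ‖(α • x) ^ (n : ℕ)‖ ^ _ = ‖α‖ * ‖x ^ (n : ℕ)‖ ^ _
  rw [smul_pow, norm_smul, norm_pow, Real.mul_rpow (by positivity) (norm_nonneg _), one_div,
    Real.pow_rpow_inv_natCast (norm_nonneg α) n.ne_zero]

theorem spectral_radius_seminorm
    {𝕜 A : Type*} [RCLike 𝕜] [NormedCommRing A] [NormedAlgebra 𝕜 A] [NormOneClass A]
    (R : A → ℝ)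
    (hR : ∀ x : A, R x = ⨅ n : ℕ+, ‖x ^ (n : ℕ)‖ ^ ((1 : ℝ) / (n : ℕ))) :
    (∀ x : A, Tendsto (fun n : ℕ => ‖x ^ n‖ ^ ((1 : ℝ) / n)) atTop (nhds (R x))) ∧
    (∀ (α : 𝕜) (x : A), R (α • x) = ‖α‖ * R x) ∧
    (∀ x y : A, R (x + y) ≤ R x + R y) ∧
    R 1 = 1 ∧
    (∀ x y : A, R (x * y) ≤ R x * R y) := by
  obtain rfl : R = smoothingFun (normRingSeminorm A) := funext hR
  have hμ1 : normRingSeminorm A 1 = 1 := norm_one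
  exact ⟨tendsto_smoothingFun_of_map_one_le_one _ hμ1.le, smoothingFun_norm_smul,
    smoothingFun_add_le _ hμ1.le, smoothingFun_one _ hμ1, smoothingFun_mul_le _ hμ1.le⟩
end
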